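/- arXiv:2211.01688 — 3 statements merged into one kernel-verified Lean document; each statement's English description precedes it below -/
import Mathlib

section
/- Let n, k be positive integers and 0 < p < 1 with k ≤ p·n. Then B↓_{n,k}(p) < B_{n,k}(p) < B↑_{n,k}(p) < (89/44)·B↓_{n,k}(p). -/
open Real

/-- Binomial probability `b_{n,k}(p)`. -/
noncomputable def b (n k : ℕ) (p : ℝ) : ℝ :=
  (n.choose k : ℝ) * p ^ k * (1 - p) ^ (n - k)

/-- Lower tail probability `B_{n,k}(p)`. -/
noncomputable def B (n k : ℕ) (p : ℝ) : ℝ :=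
  ∑ j ∈ Finset.range (k + 1), (n.choose j : ℝ) * p ^ j * (1 - p) ^ (n - j)

/-- Relative entropy `D(f‖p)`. -/
noncomputable def D (f p : ℝ) : ℝ :=
  f * Real.log (f / p) + (1 - f) * Real.log ((1 - f) / (1 - p))

noncomputable def L (n k p : ℝ) : ℝ :=
  (k + 1 - p * n + Real.sqrt ((p * n - k + 1) ^ 2 + 4 * (1 - p) * k)) / 2

noncomputable def V (n k p a : ℝ) : ℝ :=
  a + p * (n - k + a + 1) / (p * n + p - k + a)

noncomputable def U (n k p : ℝ) : ℝ := ⨅ a : ℕ, V n k p (a : ℝ)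

/-- The lower bound `B↓_{n,k}(p)`. -/
noncomputable def Bdown (n k : ℕ) (p : ℝ) : ℝ :=
  Real.sqrt n * L n k p / Real.sqrt (2 * Real.pi * k * ((n : ℝ) - k)) *
    Real.exp (-(n * D ((k : ℝ) / n) p)) *
    Real.exp (1 / (12 * n) - 1 / (12 * k) - 1 / (12 * ((n : ℝ) - k)))

/-- The upper bound `B↑_{n,k}(p)`. -/
noncomputable def Bup (n k : ℕ) (p : ℝ) : ℝ :=
  Real.sqrt n * U n k p / Real.sqrt (2 * Real.pi * k * ((n : ℝ) - k)) *
    Real.exp (-(n * D ((k : ℝ) / n) p)) *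
    Real.exp (1 / (12 * n + 1) - 1 / (12 * k + 1) - 1 / (12 * ((n : ℝ) - k) + 1))

/-!
Let `r m` be the remainder in Stirling's formula `m! = √(2πm) (m/e)^m e^{r m}`. Then
`b_{n,k}(p) = √n / √(2πk(n-k)) · e^{-n D(k/n‖p)} · e^{r n - r k - r (n-k)}`.
Robbins' estimates of the Stirling series show that `1/(12m) - r m` decreases and
`r m - 1/(12m+1)` strictly decreases, both to `0`; such a sequence satisfies
`f (k + j) ≤ f k + f j`, which places `r n - r k - r (n-k)` between the exponents of the last
factors of `B↓` and `B↑`. These two exponents differ by at most `87/7800` (attained at `n = 2`,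
`k = 1`), and `e^{87/7800} < 89/88`.

It remains to show `L b_{n,k} < B_{n,k} ≤ U b_{n,k}` and `U ≤ 2L`. `L` is the larger root of
`(x - 1)(x + pn - k) = qk`, which makes `L(k) < 1 + (b_{k-1}/b_k) L(k-1)`, so the recursion
`B_k = b_k + B_{k-1}` gives the lower bound by induction. For the upper bound, `k ≤ pn` lies left
of the mode, so each of the top `a` terms of `B_k` is at most `b_k`, while the ratios
`b_{j-1}/b_j = jq/((n-j+1)p)` increase with `j`, so the remaining terms are dominated by a
geometric series: `B_k ≤ V(a) b_k` for every `a`. Finally `V(⌈L - 1⌉) ≤ 2L`.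
-/

open Filter Topology Stirling
open scoped Nat

lemma nonneg_of_antitoneOn_of_tendsto_zero {f : ℕ → ℝ} {m₀ m : ℕ}
    (hf : AntitoneOn f (Set.Ici m₀)) (hlim : Tendsto f atTop (𝓝 0)) (hm : m₀ ≤ m) :
    0 ≤ f m :=
  le_of_tendsto hlim (eventually_atTop.2 ⟨m, fun _ hm' => hf hm (hm.trans hm') hm'⟩)

lemma apply_add_le_of_succ_le {f : ℕ → ℝ} (hf : ∀ m ≥ 1, f (m + 1) ≤ f m)
    (hlim : Tendsto f atTop (𝓝 0)) {k j : ℕ} (hk : 1 ≤ k) (hj : 1 ≤ j) :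
    f (k + j) ≤ f k + f j := by
  have hanti : AntitoneOn f (Set.Ici 1) := antitoneOn_nat_Ici_of_succ_le hf
  have := hanti hk (hk.trans (Nat.le_add_right k j)) (Nat.le_add_right k j)
  linarith [nonneg_of_antitoneOn_of_tendsto_zero hanti hlim hj]

lemma apply_add_lt_of_succ_lt {f : ℕ → ℝ} (hf : ∀ m ≥ 1, f (m + 1) < f m)
    (hlim : Tendsto f atTop (𝓝 0)) {k j : ℕ} (hk : 1 ≤ k) (hj : 1 ≤ j) :
    f (k + j) < f k + f j := by
  have hanti : AntitoneOn f (Set.Ici 1) := antitoneOn_nat_Ici_of_succ_le fun m hm => (hf m hm).le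
  have := hanti (Nat.le_succ_of_le hk) (by omega : 1 ≤ k + j) (Nat.add_le_add_left hj k)
  linarith [hf k hk, nonneg_of_antitoneOn_of_tendsto_zero hanti hlim hj]

noncomputable def stirlingRem (m : ℕ) : ℝ := log (stirlingSeq m) - log √π

lemma factorial_eq_stirling {m : ℕ} (hm : m ≠ 0) :
    (m ! : ℝ) = √(2 * π * m) * (m / exp 1) ^ m * exp (stirlingRem m) := by
  obtain ⟨m, rfl⟩ := Nat.exists_eq_succ_of_ne_zero hm
  have hpos := stirlingSeq'_pos m
  rw [stirlingRem, exp_sub, exp_log hpos, exp_log (by positivity), stirlingSeq,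
    show (2 * π * ((m + 1 : ℕ) : ℝ)) = π * (2 * (m + 1 : ℕ)) by ring, sqrt_mul pi_pos.le]
  field_simp

lemma tendsto_stirlingRem : Tendsto stirlingRem atTop (𝓝 0) := by
  have h := (tendsto_stirlingSeq_sqrt_pi.log (by positivity)).sub_const (log √π)
  rwa [sub_self] at h

lemma tendsto_one_div_twelve_mul_add (c : ℝ) :
    Tendsto (fun m : ℕ => 1 / (12 * (m : ℝ) + c)) atTop (𝓝 0) := by
  simpa only [one_div, Pi.inv_def] using (tendsto_atTop_add_const_right _ c
    (tendsto_natCast_atTop_atTop.const_mul_atTop (by norm_num : (0 : ℝ) < 12))).inv_tendsto_atTop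

lemma stirlingRem_sub_succ_le {m : ℕ} (hm : 1 ≤ m) :
    stirlingRem m - stirlingRem (m + 1) ≤
      1 / (12 * (m : ℝ)) - 1 / (12 * ((m + 1 : ℕ) : ℝ)) := by
  have h := log_stirlingSeq_sdiff_le m
  have hm' : (1 : ℝ) ≤ m := by exact_mod_cast hm
  rw [stirlingRem, stirlingRem]
  convert h using 1
  · ring
  · push_cast; field_simp; ring

lemma lt_stirlingRem_sub_succ {m : ℕ} (hm : 1 ≤ m) :
    1 / (12 * (m : ℝ) + 1) - 1 / (12 * ((m + 1 : ℕ) : ℝ) + 1) <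
      stirlingRem m - stirlingRem (m + 1) := by
  obtain ⟨i, rfl⟩ := Nat.exists_eq_add_of_le' hm
  set X : ℝ := (1 / (2 * ((i + 1 : ℕ) : ℝ) + 1)) ^ 2 with hX
  have hX0 : 0 < X := by positivity
  have hX1 : X < 3 := by
    rw [hX, div_pow, one_pow, div_lt_iff₀ (by positivity)]
    push_cast; nlinarith [(Nat.cast_nonneg i : (0 : ℝ) ≤ i)]
  -- `2j + 1 ≤ 3^j` bounds the Stirling series termwise below by a geometric series
  have hgeom : HasSum (fun j : ℕ => (X / 3) ^ (j + 1)) (X / 3 / (1 - X / 3)) := by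
    simpa [pow_succ', div_eq_mul_inv] using
      (hasSum_geometric_of_lt_one (by positivity) (by linarith : X / 3 < 1)).mul_left (X / 3)
  have hsum := hasSum_le (fun j => ?_) hgeom (log_stirlingSeq_sdiff_hasSum i)
  · have hrem : stirlingRem (i + 1) - stirlingRem (i + 1 + 1) =
        log (stirlingSeq (i + 1)) - log (stirlingSeq (i + 2)) := by
      rw [stirlingRem, stirlingRem]; ring
    rw [hrem]
    refine lt_of_lt_of_le ?_ hsum
    have hi : (0 : ℝ) ≤ i := i.cast_nonneg
    rw [hX]
    push_cast
    rw [div_sub_div _ _ (by positivity) (by positivity),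
      div_lt_div_iff₀ (by positivity) (by field_simp; nlinarith)]
    field_simp
    nlinarith
  · have h3 : (2 * ((j + 1 : ℕ) : ℝ) + 1) ≤ 3 ^ (j + 1) := by
      have := one_add_mul_le_pow (by norm_num : (-2 : ℝ) ≤ 2) (j + 1)
      norm_num at this; push_cast; linarith
    rw [div_pow, one_div_mul_eq_div, le_div_iff₀ (by positivity), div_mul_eq_mul_div,
      div_le_iff₀ (by positivity)]
    exact mul_le_mul_of_nonneg_left h3 (by positivity)

noncomputable def robbinsLower (n k : ℕ) : ℝ :=
  1 / (12 * (n : ℝ)) - 1 / (12 * (k : ℝ)) - 1 / (12 * ((n : ℝ) - k))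

noncomputable def robbinsUpper (n k : ℕ) : ℝ :=
  1 / (12 * (n : ℝ) + 1) - 1 / (12 * (k : ℝ) + 1) - 1 / (12 * ((n : ℝ) - k) + 1)

lemma stirlingRem_sub_bounds {n k : ℕ} (hk : 0 < k) (hkn : k < n) :
    robbinsLower n k ≤ stirlingRem n - stirlingRem k - stirlingRem (n - k) ∧
      stirlingRem n - stirlingRem k - stirlingRem (n - k) < robbinsUpper n k := by
  obtain ⟨j, hj, rfl⟩ : ∃ j, 1 ≤ j ∧ n = k + j := ⟨n - k, by omega, by omega⟩
  have hlimL : Tendsto (fun m : ℕ => 1 / (12 * (m : ℝ)) - stirlingRem m) atTop (𝓝 0) := by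
    simpa using (tendsto_one_div_twelve_mul_add 0).sub tendsto_stirlingRem
  have hlimU :
      Tendsto (fun m : ℕ => stirlingRem m - 1 / (12 * (m : ℝ) + 1)) atTop (𝓝 0) := by
    simpa using tendsto_stirlingRem.sub (tendsto_one_div_twelve_mul_add 1)
  have hL := apply_add_le_of_succ_le (fun m hm => by linarith [stirlingRem_sub_succ_le hm]) hlimL
    hk hj
  have hU := apply_add_lt_of_succ_lt
    (fun m hm => by linarith [lt_stirlingRem_sub_succ hm]) hlimU hk hj
  simp only [robbinsLower, robbinsUpper, Nat.add_sub_cancel_left, Nat.cast_add,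
    add_sub_cancel_left] at hL hU ⊢
  constructor <;> linarith

lemma one_div_sub_one_div_add_one_anti {x y : ℝ} (hx : 0 < x) (hxy : x ≤ y) :
    1 / (12 * y) - 1 / (12 * y + 1) ≤ 1 / (12 * x) - 1 / (12 * x + 1) := by
  have hprod (z : ℝ) (hz : 0 < z) :
      1 / (12 * z) - 1 / (12 * z + 1) = 1 / (12 * z * (12 * z + 1)) := by
    field_simp; ring
  have hy : 0 < y := hx.trans_le hxy
  rw [hprod y hy, hprod x hx]
  gcongr

lemma robbinsUpper_sub_robbinsLower_le {n k : ℕ} (hk : 0 < k) (hkn : k < n) :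
    robbinsUpper n k - robbinsLower n k ≤ 87 / 7800 := by
  rw [robbinsUpper, robbinsLower]
  have hk1 : (1 : ℝ) ≤ k := by exact_mod_cast hk
  have hj1 : (1 : ℝ) ≤ n - k := by
    have : (k : ℝ) + 1 ≤ n := by exact_mod_cast hkn
    linarith
  have hn : 0 < 1 / (12 * (n : ℝ)) - 1 / (12 * (n : ℝ) + 1) :=
    sub_pos.2 (one_div_lt_one_div_of_lt (by linarith) (by linarith))
  by_cases h : k = 1 ∧ n = 2
  · obtain ⟨rfl, rfl⟩ := h
    norm_num
  · have h2 : (2 : ℝ) ≤ k ∨ (2 : ℝ) ≤ n - k := by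
      rcases Nat.lt_or_ge 1 k with h' | h'
      · exact Or.inl (by exact_mod_cast h')
      · have : (3 : ℝ) ≤ n := by exact_mod_cast (by omega : 3 ≤ n)
        have : (k : ℝ) ≤ 1 := by exact_mod_cast h'
        exact Or.inr (by linarith)
    have g1 : ∀ {x : ℝ}, 1 ≤ x → 1 / (12 * x) - 1 / (12 * x + 1) ≤ 1 / 156 := fun hx =>
      (one_div_sub_one_div_add_one_anti one_pos hx).trans_eq (by norm_num)
    have g2 : ∀ {x : ℝ}, 2 ≤ x → 1 / (12 * x) - 1 / (12 * x + 1) ≤ 1 / 600 := fun hx =>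
      (one_div_sub_one_div_add_one_anti two_pos hx).trans_eq (by norm_num)
    rcases h2 with h2 | h2
    · linarith [g2 h2, g1 hj1]
    · linarith [g1 hk1, g2 h2]

lemma exp_robbinsUpper_lt {n k : ℕ} (hk : 0 < k) (hkn : k < n) :
    exp (robbinsUpper n k) < 89 / 88 * exp (robbinsLower n k) := by
  have hgap := exp_le_exp.2 (robbinsUpper_sub_robbinsLower_le hk hkn)
  have hexp := exp_bound_div_one_sub_of_interval' (x := 87 / 7800) (by norm_num) (by norm_num)
  rw [exp_sub, div_le_iff₀ (exp_pos _)] at hgap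
  calc exp (robbinsUpper n k) ≤ exp (87 / 7800) * exp (robbinsLower n k) := hgap
    _ < 89 / 88 * exp (robbinsLower n k) := by
      gcongr
      linarith [show (1 : ℝ) / (1 - 87 / 7800) < 89 / 88 by norm_num]

lemma exp_neg_mul_D {n k : ℕ} {p : ℝ} (hp0 : 0 < p) (hp1 : p < 1) (hk : 0 < k) (hkn : k < n) :
    exp (-(n * D (k / n) p)) = (n * p / k) ^ k * (n * (1 - p) / (n - k)) ^ (n - k) := by
  have hk' : (0 : ℝ) < k := by exact_mod_cast hk
  have hn : (0 : ℝ) < n := by exact_mod_cast hk.trans hkn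
  have hnk : (0 : ℝ) < n - k := sub_pos.2 (by exact_mod_cast hkn)
  have hq : 0 < 1 - p := by linarith
  have hA : 0 < n * p / k := by positivity
  have hB : 0 < n * (1 - p) / (n - k) := div_pos (mul_pos (by linarith) hq) hnk
  have e1 : k / n / p = (n * p / k : ℝ)⁻¹ := by field_simp
  have e2 : (1 - k / n) / (1 - p) = (n * (1 - p) / (n - k) : ℝ)⁻¹ := by
    rw [inv_div, one_sub_div (by linarith)]
    field_simp
  have e3 : -(n * D (k / n) p) =
      k * log (n * p / k) + ((n - k : ℕ) : ℝ) * log (n * (1 - p) / (n - k)) := by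
    rw [D, e1, e2, log_inv, log_inv, Nat.cast_sub hkn.le]
    generalize log (n * p / k) = A
    generalize log (n * (1 - p) / (n - k)) = B
    field_simp
    ring
  rw [e3, exp_add, exp_nat_mul, exp_nat_mul, exp_log hA, exp_log hB]

noncomputable def bApprox (n k : ℕ) (p : ℝ) : ℝ :=
  Real.sqrt n / Real.sqrt (2 * Real.pi * k * ((n : ℝ) - k)) *
    Real.exp (-(n * D ((k : ℝ) / n) p))

lemma b_eq_stirling {n k : ℕ} {p : ℝ} (hp0 : 0 < p) (hp1 : p < 1) (hk : 0 < k) (hkn : k < n) :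
    b n k p = bApprox n k p * exp (stirlingRem n - stirlingRem k - stirlingRem (n - k)) := by
  rw [bApprox, exp_neg_mul_D hp0 hp1 hk hkn, b, Nat.cast_choose ℝ hkn.le,
    factorial_eq_stirling (by omega), factorial_eq_stirling hk.ne',
    factorial_eq_stirling (by omega : n - k ≠ 0), exp_sub, exp_sub]
  obtain ⟨j, rfl⟩ : ∃ j, n = k + j := ⟨n - k, by omega⟩
  have hj : (0 : ℝ) < j := by exact_mod_cast (by omega : 0 < j)
  have hk' : (0 : ℝ) < k := by exact_mod_cast hk
  have hkj : ((k + j : ℕ) : ℝ) - k = j := by push_cast; ring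
  simp only [hkj, Nat.add_sub_cancel_left]
  have h2π : (0 : ℝ) ≤ 2 * π := by positivity
  simp only [mul_assoc (2 * π), sqrt_mul h2π, sqrt_mul hk'.le]
  push_cast
  simp only [div_pow, mul_pow, pow_add]
  field_simp

lemma bApprox_pos {n k : ℕ} (p : ℝ) (hk : 0 < k) (hkn : k < n) : 0 < bApprox n k p := by
  have hkn' : (k : ℝ) < n := by exact_mod_cast hkn
  have hk' : (0 : ℝ) < k := by exact_mod_cast hk
  exact mul_pos (div_pos (sqrt_pos.2 (by linarith))
    (sqrt_pos.2 (mul_pos (by positivity) (by linarith)))) (exp_pos _)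

section Binomial

variable {n k : ℕ} {p : ℝ}

lemma le_of_cast_le_mul (hp1 : p ≤ 1) (hkp : (k : ℝ) ≤ p * n) : k ≤ n := by
  exact_mod_cast (by nlinarith [(Nat.cast_nonneg n : (0 : ℝ) ≤ n)] : (k : ℝ) ≤ n)

lemma B_zero : B n 0 p = b n 0 p := by
  simp [B, b]

lemma B_succ : B n (k + 1) p = B n k p + b n (k + 1) p :=
  Finset.sum_range_succ _ _

lemma b_nonneg (hp0 : 0 ≤ p) (hp1 : p ≤ 1) : 0 ≤ b n k p := by
  have : 0 ≤ 1 - p := by linarith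
  unfold b; positivity

lemma b_pos (hp0 : 0 < p) (hp1 : p < 1) (hk : k ≤ n) : 0 < b n k p := by
  have : 0 < 1 - p := by linarith
  have : (0 : ℝ) < n.choose k := by exact_mod_cast Nat.choose_pos hk
  unfold b; positivity

lemma B_nonneg (hp0 : 0 ≤ p) (hp1 : p ≤ 1) : 0 ≤ B n k p :=
  Finset.sum_nonneg fun _ _ => b_nonneg hp0 hp1

lemma succ_mul_b_succ (hk : k + 1 ≤ n) :
    (k + 1) * (1 - p) * b n (k + 1) p = (n - k) * p * b n k p := by
  have hchoose := congrArg (Nat.cast : ℕ → ℝ) (Nat.choose_succ_right_eq n k)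
  push_cast [Nat.cast_sub (by omega : k ≤ n)] at hchoose
  rw [b, b, show n - k = n - (k + 1) + 1 by omega, pow_succ, pow_succ]
  linear_combination (p ^ k * p * (1 - p) ^ (n - (k + 1)) * (1 - p)) * hchoose

lemma b_le_b_succ (hp0 : 0 < p) (hp1 : p < 1) (hk : (k + 1 : ℝ) ≤ p * (n + 1)) :
    b n k p ≤ b n (k + 1) p := by
  have hnk : (k : ℝ) < n := by nlinarith
  have hkn : k + 1 ≤ n := by exact_mod_cast hnk
  have hratio := succ_mul_b_succ (p := p) hkn
  have hb := b_pos hp0 hp1 hkn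
  refine le_of_mul_le_mul_left ?_ (mul_pos (sub_pos.2 hnk) hp0)
  nlinarith

lemma b_le_b_of_le (hp0 : 0 < p) (hp1 : p < 1) {j : ℕ} (hjk : j ≤ k)
    (hk : (k : ℝ) ≤ p * (n + 1)) : b n j p ≤ b n k p := by
  induction k, hjk using Nat.le_induction with
  | base => exact le_rfl
  | succ k _ ih =>
    push_cast at hk
    exact (ih (by linarith)).trans (b_le_b_succ hp0 hp1 hk)

/-- `B_s ≤ b_s / (1 - ρ_s)` for `ρ_s = b_{s-1} / b_s = s q / ((n - s + 1) p)`, with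
denominators cleared. -/
lemma B_mul_le (hp0 : 0 ≤ p) (hp1 : p ≤ 1) {s : ℕ} (hs : s ≤ n) :
    B n s p * (p * (n + 1) - s) ≤ p * (n + 1 - s) * b n s p := by
  induction s with
  | zero => simp [B, b, mul_comm]
  | succ s ih =>
    have ih := ih (by omega)
    have hns : (s : ℝ) + 1 ≤ n := by exact_mod_cast hs
    have hratio := succ_mul_b_succ (p := p) hs
    have hB := B_nonneg (n := n) (k := s) hp0 hp1
    have hq : 0 ≤ 1 - p := by linarith
    have h1 : (n - s + 1) * (B n s p * (p * (n + 1) - s - 1)) ≤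
        (n - s + 1) * (p * (n - s) * b n s p) := by
      nlinarith [mul_le_mul_of_nonneg_left ih (by linarith : (0 : ℝ) ≤ n - s),
        mul_nonneg hB (mul_nonneg (by linarith : (0 : ℝ) ≤ n + 1) hq)]
    have h2 := le_of_mul_le_mul_left h1 (by linarith)
    rw [B_succ]
    push_cast
    nlinarith

lemma B_le_B_add (hp0 : 0 < p) (hp1 : p < 1) {s : ℕ} (hsk : s ≤ k)
    (hk : (k : ℝ) ≤ p * (n + 1)) : B n k p ≤ B n s p + (k - s) * b n k p := by
  induction k, hsk using Nat.le_induction with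
  | base => simp
  | succ k _ ih =>
    push_cast at hk ⊢
    have hmono := b_le_b_succ hp0 hp1 hk
    have hks : (s : ℝ) ≤ k := by exact_mod_cast ‹s ≤ k›
    have := ih (by linarith)
    rw [B_succ]
    nlinarith [mul_le_mul_of_nonneg_left hmono (sub_nonneg.2 hks)]

lemma B_le_V_mul_b (hp0 : 0 < p) (hp1 : p < 1) (hkp : (k : ℝ) ≤ p * n) (a : ℕ) :
    B n k p ≤ V n k p a * b n k p := by
  have hkn := le_of_cast_le_mul hp1.le hkp
  have hk : (k : ℝ) ≤ p * (n + 1) := by linarith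
  have hbk := b_pos hp0 hp1 hkn
  have hden : 0 < p * n + p - k + a := by linarith [a.cast_nonneg (α := ℝ)]
  have hnk : (k : ℝ) ≤ n := by exact_mod_cast hkn
  have hfrac : 0 ≤ p * (n - k + a + 1) / (p * n + p - k + a) :=
    div_nonneg (mul_nonneg hp0.le (by linarith)) hden.le
  rw [V, add_mul]
  rcases le_or_gt a k with hak | hka
  · have hsplit := B_le_B_add hp0 hp1 (Nat.sub_le k a) hk
    have hgeom := B_mul_le hp0.le hp1.le ((Nat.sub_le k a).trans hkn)
    have hmode := b_le_b_of_le (n := n) hp0 hp1 (Nat.sub_le k a) hk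
    push_cast [Nat.cast_sub hak] at hsplit hgeom
    have : B n (k - a) p ≤ p * (n - k + a + 1) / (p * n + p - k + a) * b n k p := by
      rw [div_mul_eq_mul_div, le_div_iff₀ hden]
      nlinarith [mul_le_mul_of_nonneg_left hmode
        (mul_nonneg hp0.le (by linarith) : 0 ≤ p * (n - k + a + 1))]
    linarith
  · have hsplit := B_le_B_add hp0 hp1 (Nat.zero_le k) hk
    have hmode := b_le_b_of_le (n := n) hp0 hp1 (Nat.zero_le k) hk
    have hka' : (k : ℝ) + 1 ≤ a := by exact_mod_cast hka
    rw [B_zero] at hsplit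
    nlinarith [mul_le_mul_of_nonneg_right hka' hbk.le, mul_nonneg hfrac hbk.le]

end Binomial

section LargerRoot

variable {N K p : ℝ}

lemma L_sub_one_mul (hK : 0 ≤ (1 - p) * K) :
    (L N K p - 1) * (L N K p + p * N - K) = (1 - p) * K := by
  have hS := sq_sqrt (by nlinarith : 0 ≤ (p * N - K + 1) ^ 2 + 4 * (1 - p) * K)
  rw [L]
  linear_combination hS / 4

lemma one_le_L (hKN : K ≤ p * N) (hK : 0 ≤ (1 - p) * K) : 1 ≤ L N K p := by
  have h := sqrt_le_sqrt
    (by nlinarith : (p * N - K + 1) ^ 2 ≤ (p * N - K + 1) ^ 2 + 4 * (1 - p) * K)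
  rw [sqrt_sq (by linarith)] at h
  rw [L]
  linarith

lemma L_lt_of_lt {x : ℝ} (hKN : K ≤ p * N) (hx : 1 ≤ x)
    (h : (1 - p) * K < (x - 1) * (x + p * N - K)) : L N K p < x := by
  have hS : sqrt ((p * N - K + 1) ^ 2 + 4 * (1 - p) * K) < 2 * x - 1 + (p * N - K) := by
    rw [sqrt_lt' (by linarith)]
    nlinarith
  rw [L]
  linarith

lemma L_zero (hN : 0 ≤ p * N) : L N 0 p = 1 := by
  rw [L, show (p * N - 0 + 1) ^ 2 + 4 * (1 - p) * 0 = (p * N + 1) ^ 2 by ring,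
    sqrt_sq (by linarith)]
  ring

lemma L_succ_lt (hp0 : 0 < p) (hp1 : p < 1) (hK : 0 ≤ K) (hKN : K + 1 ≤ p * N) :
    L N (K + 1) p < 1 + (K + 1) * (1 - p) / ((N - K) * p) * L N K p := by
  have hq : 0 < 1 - p := by linarith
  have hNK : 0 < N - K := by nlinarith
  set y := L N K p
  have hy1 : 1 ≤ y := one_le_L (by linarith) (by positivity)
  have hid := L_sub_one_mul (N := N) (K := K) (p := p) (by positivity)
  set t := (K + 1) * (1 - p) / ((N - K) * p) * y with ht
  -- `y (y + pN - K - 1) = p (N - K)` turns `t` into `(K + 1)(1 - p) / (y + pN - K - 1)`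
  have htd : t * (y + p * N - K - 1) = (K + 1) * (1 - p) := by
    rw [ht, div_mul_eq_mul_div, div_mul_eq_mul_div, div_eq_iff (by positivity)]
    linear_combination (K + 1) * (1 - p) * hid
  have ht1 : y - 1 < t := by
    by_contra! h
    nlinarith [mul_le_mul_of_nonneg_right h (by linarith : 0 ≤ y + p * N - K - 1)]
  apply L_lt_of_lt (by linarith) (by linarith)
  nlinarith [mul_pos (by linarith : 0 < t) (by linarith : 0 < t + 1 - y)]

lemma V_natCeil_le (hp0 : 0 < p) (hp1 : p ≤ 1) (hK : 0 ≤ K) (hKN : K ≤ p * N) :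
    V N K p ⌈L N K p - 1⌉₊ ≤ 2 * L N K p := by
  have hq : 0 ≤ 1 - p := by linarith
  set x := L N K p - 1
  have hx0 : 0 ≤ x := by linarith [one_le_L hKN (by positivity : 0 ≤ (1 - p) * K)]
  have hid := L_sub_one_mul (N := N) (K := K) (p := p) (by positivity)
  set a : ℕ := ⌈x⌉₊
  have ha1 : x ≤ a := Nat.le_ceil x
  have ha2 : (a : ℝ) < x + 1 := Nat.ceil_lt_add_one hx0
  have hden : 0 < p * N + p - K + a := by linarith
  -- by `x (x + 1 + pN - K) = qK`, this is `(x + 1 - a) (pN + p - K + a) + (a - x) (x + q) ≥ 0`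
  have : p * (N - K + a + 1) / (p * N + p - K + a) ≤ 2 * (x + 1) - a := by
    rw [div_le_iff₀ hden]
    nlinarith [mul_nonneg (by linarith : 0 ≤ x + 1 - a) hden.le,
      mul_nonneg (by linarith : 0 ≤ a - x) (by linarith : 0 ≤ x + (1 - p))]
  rw [V]
  linarith

end LargerRoot

section Tail

variable {n k : ℕ} {p : ℝ}

lemma L_mul_b_succ_lt (hp0 : 0 < p) (hp1 : p < 1) (hk : ((k + 1 : ℕ) : ℝ) ≤ p * n) :
    L n (k + 1 : ℕ) p * b n (k + 1) p < b n (k + 1) p + L n k p * b n k p := by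
  have hkn : k + 1 ≤ n := le_of_cast_le_mul hp1.le hk
  push_cast at hk ⊢
  have hnk : (0 : ℝ) < n - k := by nlinarith
  have hratio := succ_mul_b_succ (p := p) hkn
  have hbk : b n k p = (k + 1) * (1 - p) / ((n - k) * p) * b n (k + 1) p := by
    field_simp
    linarith
  calc L n (k + 1) p * b n (k + 1) p
      < (1 + (k + 1) * (1 - p) / ((n - k) * p) * L n k p) * b n (k + 1) p :=
        mul_lt_mul_of_pos_right (L_succ_lt hp0 hp1 k.cast_nonneg hk) (b_pos hp0 hp1 hkn)
    _ = b n (k + 1) p + L n k p * b n k p := by rw [hbk]; ring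

lemma L_mul_b_le_B (hp0 : 0 < p) (hp1 : p < 1) (hk : (k : ℝ) ≤ p * n) :
    L n k p * b n k p ≤ B n k p := by
  induction k with
  | zero => rw [Nat.cast_zero, L_zero (by positivity), one_mul, B_zero]
  | succ k ih =>
    have := ih (by push_cast at hk; linarith)
    rw [B_succ]
    linarith [L_mul_b_succ_lt hp0 hp1 hk]

lemma L_mul_b_lt_B (hp0 : 0 < p) (hp1 : p < 1) (hk0 : 0 < k) (hk : (k : ℝ) ≤ p * n) :
    L n k p * b n k p < B n k p := by
  obtain ⟨k, rfl⟩ := Nat.exists_eq_succ_of_ne_zero hk0.ne'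
  have := L_mul_b_le_B hp0 hp1 (by push_cast at hk; linarith : (k : ℝ) ≤ p * n)
  rw [B_succ]
  linarith [L_mul_b_succ_lt hp0 hp1 hk]

lemma bddBelow_range_V (hp0 : 0 < p) (hp1 : p < 1) (hkp : (k : ℝ) ≤ p * n) :
    BddBelow (Set.range fun a : ℕ => V n k p a) := by
  have hb := b_pos hp0 hp1 (le_of_cast_le_mul hp1.le hkp)
  exact ⟨B n k p / b n k p, Set.forall_mem_range.2 fun a =>
    (div_le_iff₀ hb).2 (B_le_V_mul_b hp0 hp1 hkp a)⟩

lemma B_le_U_mul_b (hp0 : 0 < p) (hp1 : p < 1) (hkp : (k : ℝ) ≤ p * n) :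
    B n k p ≤ U n k p * b n k p := by
  have hb := b_pos hp0 hp1 (le_of_cast_le_mul hp1.le hkp)
  rw [← div_le_iff₀ hb]
  exact le_ciInf fun a => (div_le_iff₀ hb).2 (B_le_V_mul_b hp0 hp1 hkp a)

lemma U_le_two_mul_L (hp0 : 0 < p) (hp1 : p < 1) (hkp : (k : ℝ) ≤ p * n) :
    U n k p ≤ 2 * L n k p :=
  (ciInf_le (bddBelow_range_V hp0 hp1 hkp) _).trans (V_natCeil_le hp0 hp1.le k.cast_nonneg hkp)

end Tail

lemma Bdown_eq (n k : ℕ) (p : ℝ) :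
    Bdown n k p = L n k p * bApprox n k p * exp (robbinsLower n k) := by
  rw [Bdown, bApprox, robbinsLower]; ring

lemma Bup_eq (n k : ℕ) (p : ℝ) :
    Bup n k p = U n k p * bApprox n k p * exp (robbinsUpper n k) := by
  rw [Bup, bApprox, robbinsUpper]; ring

theorem binomial_tail_universal_bounds_general
    (n k : ℕ) (hk : 0 < k) (p : ℝ) (hp0 : 0 < p) (hp1 : p < 1)
    (hkp : (k : ℝ) ≤ p * n) :
    Bdown n k p < B n k p ∧ B n k p < Bup n k p ∧
      Bup n k p < (89 / 44) * Bdown n k p := by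
  have hkn : k < n := by
    have : (0 : ℝ) < k := by exact_mod_cast hk
    exact_mod_cast (by nlinarith : (k : ℝ) < n)
  set r := stirlingRem n - stirlingRem k - stirlingRem (n - k)
  have hb : b n k p = bApprox n k p * exp r := b_eq_stirling hp0 hp1 hk hkn
  obtain ⟨hlo, hhi⟩ := stirlingRem_sub_bounds hk hkn
  have hA := bApprox_pos p hk hkn
  have hL : 0 < L n k p := one_pos.trans_le (one_le_L hkp (by positivity))
  have hLB := L_mul_b_lt_B hp0 hp1 hk hkp
  have hUB := B_le_U_mul_b hp0 hp1 hkp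
  have hU : 0 < U n k p := by nlinarith [b_pos hp0 hp1 hkn.le]
  refine ⟨?_, ?_, ?_⟩
  · calc Bdown n k p = L n k p * bApprox n k p * exp (robbinsLower n k) := Bdown_eq n k p
      _ ≤ L n k p * bApprox n k p * exp r := by gcongr
      _ = L n k p * b n k p := by rw [hb, mul_assoc]
      _ < B n k p := hLB
  · calc B n k p ≤ U n k p * b n k p := hUB
      _ = U n k p * bApprox n k p * exp r := by rw [hb, mul_assoc]
      _ < U n k p * bApprox n k p * exp (robbinsUpper n k) := by gcongr
      _ = Bup n k p := (Bup_eq n k p).symm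
  · calc Bup n k p = U n k p * bApprox n k p * exp (robbinsUpper n k) := Bup_eq n k p
      _ ≤ 2 * L n k p * bApprox n k p * exp (robbinsUpper n k) := by
        gcongr; exact U_le_two_mul_L hp0 hp1 hkp
      _ < 2 * L n k p * bApprox n k p * (89 / 88 * exp (robbinsLower n k)) := by
        gcongr; exact exp_robbinsUpper_lt hk hkn
      _ = 89 / 44 * Bdown n k p := by rw [Bdown_eq]; ring

theorem binomial_tail_universal_bounds
    (n k : ℕ) (hn : 0 < n) (hk : 0 < k) (p : ℝ) (hp0 : 0 < p) (hp1 : p < 1)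
    (hkp : (k : ℝ) ≤ p * n) :
    Bdown n k p < B n k p ∧ B n k p < Bup n k p ∧
      Bup n k p < (89 / 44) * Bdown n k p :=
  binomial_tail_universal_bounds_general n k hk p hp0 hp1 hkp
end

section
/- Suppose 0 < f < p < 1 with q = 1 - p. Then: (i) the ratio B_{n,f·n}(p)/b_{n,f·n}(p) is strictly increasing in n over positive integers n for which f·n is a nonnegative integer; (ii) for every positive integer n, B_{n,⌊f·n⌋}(p)/b_{n,⌊f·n⌋}(p) < (1-f)·p/(p-f); and (iii) lim_{n→∞} B_{n,⌊f·n⌋}(p)/b_{n,⌊f·n⌋}(p) = (1-f)·p/(p-f). -/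
open Real Filter

/-!
Dividing by the top term, `B_{n,k}/b_{n,k} = ∑_{i ≤ k} b_{n,k-i}/b_{n,k}`, and the `i`-th relative
term is a product of `i` consecutive ratios `b_{n,j-1}/b_{n,j} = j q / (p (n - j + 1))`.
For `k ≤ f n` each of these ratios is at most the odds ratio `x = f q / ((1 - f) p) < 1`, so the
sum is dominated by the geometric series `∑ xⁱ = (1 - f) p / (p - f)`, strictly because the
series has more terms. For `k = f n` each ratio increases with `n` while the number of terms
grows, which gives monotonicity; and for `k = ⌊f n⌋` each ratio tends to `x`, so the limit
follows from dominated convergence (Tannery's theorem).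
-/

open Finset

/-- `stepRatio p n k s = b_{n,k-s-1}(p) / b_{n,k-s}(p)` whenever `s < k ≤ n`. -/
noncomputable def stepRatio (p : ℝ) (n k s : ℕ) : ℝ :=
  ((k : ℝ) - s) * (1 - p) / (p * ((n : ℝ) - k + 1 + s))

/-- `termRatio p n k i = b_{n,k-i}(p) / b_{n,k}(p)` for `i ≤ k ≤ n`; it vanishes for `i > k`. -/
noncomputable def termRatio (p : ℝ) (n k i : ℕ) : ℝ :=
  ∏ s ∈ range i, stepRatio p n k s

noncomputable def oddsRatio (f p : ℝ) : ℝ :=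
  f * (1 - p) / ((1 - f) * p)

section Algebra

variable {p : ℝ} {n k : ℕ}

lemma b_ne_zero (hp0 : p ≠ 0) (hp1 : p ≠ 1) (hkn : k ≤ n) : b n k p ≠ 0 := by
  have hchoose : (n.choose k : ℝ) ≠ 0 := by exact_mod_cast (Nat.choose_pos hkn).ne'
  have hq : 1 - p ≠ 0 := sub_ne_zero.mpr (Ne.symm hp1)
  unfold b
  positivity

lemma b_sub_succ {s : ℕ} (hp : p ≠ 0) (hsk : s < k) (hkn : k ≤ n) :
    b n (k - (s + 1)) p = b n (k - s) p * stepRatio p n k s := by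
  obtain ⟨j, rfl⟩ : ∃ j, k = j + (s + 1) := ⟨k - (s + 1), by omega⟩
  have hchoose : (n.choose (j + 1) : ℝ) * ((j : ℝ) + 1) = (n.choose j : ℝ) * ((n : ℝ) - j) := by
    rw [← Nat.cast_sub (by omega : j ≤ n)]
    exact_mod_cast Nat.choose_succ_right_eq n j
  have hjn : (j : ℝ) + 1 ≤ n := by exact_mod_cast (by omega : j + 1 ≤ n)
  have hden : p * ((n : ℝ) - j) ≠ 0 := mul_ne_zero hp (by linarith)
  have hsub : j + (s + 1) - s = j + 1 := by omega
  have hexp : n - j = n - (j + 1) + 1 := by omega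
  rw [Nat.add_sub_cancel, hsub, b, b, stepRatio, hexp, pow_succ, pow_succ]
  push_cast
  rw [show (j : ℝ) + (s + 1) - s = j + 1 by ring,
    show (n : ℝ) - (j + (s + 1)) + 1 + s = n - j by ring, mul_div_assoc', eq_div_iff hden]
  linear_combination (-(p ^ j) * p * (1 - p) ^ (n - (j + 1)) * (1 - p)) * hchoose

lemma b_sub_eq_mul_termRatio (hp : p ≠ 0) {i : ℕ} (hik : i ≤ k) (hkn : k ≤ n) :
    b n (k - i) p = b n k p * termRatio p n k i := by
  induction i with
  | zero => simp [termRatio]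
  | succ i ih =>
    rw [b_sub_succ hp hik hkn, ih (by omega), termRatio, termRatio, prod_range_succ, mul_assoc]

lemma termRatio_eq_zero_of_lt {i : ℕ} (hki : k < i) : termRatio p n k i = 0 :=
  prod_eq_zero (mem_range.mpr hki) (by simp [stepRatio])

lemma hasSum_termRatio (hp0 : p ≠ 0) (hp1 : p ≠ 1) (hkn : k ≤ n) :
    HasSum (termRatio p n k) (B n k p / b n k p) := by
  have hB : B n k p = b n k p * ∑ i ∈ range (k + 1), termRatio p n k i := by
    rw [B, ← sum_range_reflect, mul_sum]
    refine sum_congr rfl fun i hi => ?_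
    rw [show k + 1 - 1 - i = k - i by omega,
      ← b_sub_eq_mul_termRatio hp0 (Nat.lt_succ_iff.mp (mem_range.mp hi)) hkn, b]
  rw [hB, mul_div_cancel_left₀ _ (b_ne_zero hp0 hp1 hkn)]
  exact hasSum_sum_of_ne_finset_zero fun i hi =>
    termRatio_eq_zero_of_lt (not_lt.mp (mt mem_range.mpr hi))

end Algebra

section Bounds

variable {f p : ℝ} {n k : ℕ}

lemma le_of_cast_le_mul_s5 (hf1 : f ≤ 1) (hk : (k : ℝ) ≤ f * n) : k ≤ n := by
  have : (k : ℝ) ≤ n := hk.trans (by nlinarith [n.cast_nonneg (α := ℝ)])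
  exact_mod_cast this

lemma stepRatio_pos (hp0 : 0 < p) (hp1 : p < 1) {s : ℕ} (hsk : s < k) (hkn : k ≤ n) :
    0 < stepRatio p n k s := by
  have hs : (s : ℝ) < k := by exact_mod_cast hsk
  have hk : (k : ℝ) ≤ n := by exact_mod_cast hkn
  unfold stepRatio
  exact div_pos (mul_pos (by linarith) (by linarith)) (mul_pos hp0 (by linarith))

lemma termRatio_pos (hp0 : 0 < p) (hp1 : p < 1) {i : ℕ} (hik : i ≤ k) (hkn : k ≤ n) :
    0 < termRatio p n k i :=
  prod_pos fun _ hs => stepRatio_pos hp0 hp1 ((mem_range.mp hs).trans_le hik) hkn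

lemma termRatio_nonneg (hp0 : 0 < p) (hp1 : p < 1) (hkn : k ≤ n) (i : ℕ) :
    0 ≤ termRatio p n k i := by
  rcases le_or_gt i k with hik | hki
  · exact (termRatio_pos hp0 hp1 hik hkn).le
  · exact (termRatio_eq_zero_of_lt hki).ge

lemma oddsRatio_nonneg (hf0 : 0 ≤ f) (hf1 : f < 1) (hp0 : 0 < p) (hp1 : p < 1) :
    0 ≤ oddsRatio f p :=
  div_nonneg (mul_nonneg hf0 (by linarith)) (mul_nonneg (by linarith) hp0.le)

lemma oddsRatio_pos (hf0 : 0 < f) (hf1 : f < 1) (hp0 : 0 < p) (hp1 : p < 1) :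
    0 < oddsRatio f p :=
  div_pos (mul_pos hf0 (by linarith)) (mul_pos (by linarith) hp0)

lemma oddsRatio_lt_one (hfp : f < p) (hp0 : 0 < p) (hp1 : p < 1) : oddsRatio f p < 1 := by
  rw [oddsRatio, div_lt_one (mul_pos (by linarith) hp0)]
  linarith

lemma one_sub_oddsRatio_inv (hf1 : f ≠ 1) (hp : p ≠ 0) :
    (1 - oddsRatio f p)⁻¹ = (1 - f) * p / (p - f) := by
  have hf1' : 1 - f ≠ 0 := sub_ne_zero.mpr (Ne.symm hf1)
  rw [oddsRatio, one_sub_div (mul_ne_zero hf1' hp), inv_div]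
  ring_nf

lemma stepRatio_le_oddsRatio (hf0 : 0 ≤ f) (hf1 : f < 1) (hp0 : 0 < p) (hp1 : p < 1)
    (hk : (k : ℝ) ≤ f * n) {s : ℕ} (hsk : s < k) : stepRatio p n k s ≤ oddsRatio f p := by
  have hs : (s : ℝ) < k := by exact_mod_cast hsk
  have hn : (0 : ℝ) ≤ n := n.cast_nonneg
  have key : 0 ≤ f * n - k + f + s := by linarith
  rw [stepRatio, oddsRatio,
    div_le_div_iff₀ (mul_pos hp0 (by nlinarith)) (mul_pos (by linarith) hp0)]
  nlinarith [mul_nonneg (mul_pos hp0 (by linarith : 0 < 1 - p)).le key]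

lemma termRatio_le_oddsRatio_pow (hf0 : 0 ≤ f) (hf1 : f < 1) (hp0 : 0 < p) (hp1 : p < 1)
    (hk : (k : ℝ) ≤ f * n) (i : ℕ) : termRatio p n k i ≤ oddsRatio f p ^ i := by
  have hkn : k ≤ n := le_of_cast_le_mul_s5 hf1.le hk
  rcases le_or_gt i k with hik | hki
  · calc termRatio p n k i ≤ ∏ _s ∈ range i, oddsRatio f p :=
          Finset.prod_le_prod
            (fun _ hs => (stepRatio_pos hp0 hp1 ((mem_range.mp hs).trans_le hik) hkn).le)
            fun _ hs => stepRatio_le_oddsRatio hf0 hf1 hp0 hp1 hk ((mem_range.mp hs).trans_le hik)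
      _ = oddsRatio f p ^ i := by rw [prod_const, card_range]
  · rw [termRatio_eq_zero_of_lt hki]
    exact pow_nonneg (oddsRatio_nonneg hf0 hf1 hp0 hp1) i

lemma B_div_b_lt (hf0 : 0 < f) (hfp : f < p) (hp1 : p < 1) (hk : (k : ℝ) ≤ f * n) :
    B n k p / b n k p < (1 - oddsRatio f p)⁻¹ := by
  have hp0 : 0 < p := hf0.trans hfp
  have hf1 : f < 1 := hfp.trans hp1
  have hx0 := oddsRatio_pos hf0 hf1 hp0 hp1
  refine hasSum_lt (i := k + 1) (termRatio_le_oddsRatio_pow hf0.le hf1 hp0 hp1 hk) ?_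
    (hasSum_termRatio hp0.ne' hp1.ne (le_of_cast_le_mul_s5 hf1.le hk))
    (hasSum_geometric_of_lt_one hx0.le (oddsRatio_lt_one hfp hp0 hp1))
  rw [termRatio_eq_zero_of_lt (lt_add_one k)]
  exact pow_pos hx0 (k + 1)

end Bounds

section Monotone

variable {f p : ℝ} {m n km kn : ℕ}

lemma stepRatio_le_stepRatio (hf0 : 0 ≤ f) (hf1 : f < 1) (hp0 : 0 < p) (hp1 : p < 1)
    (hmn : m ≤ n) (hkm : (km : ℝ) = f * m) (hkn : (kn : ℝ) = f * n) (s : ℕ) :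
    stepRatio p m km s ≤ stepRatio p n kn s := by
  have hmn' : (m : ℝ) ≤ n := by exact_mod_cast hmn
  have hm : (0 : ℝ) ≤ m := m.cast_nonneg
  have hs0 : (0 : ℝ) ≤ s := s.cast_nonneg
  rw [stepRatio, stepRatio, hkm, hkn, div_le_div_iff₀ (mul_pos hp0 (by nlinarith))
    (mul_pos hp0 (by nlinarith))]
  have key : 0 ≤ ((n : ℝ) - m) * (f + s) := mul_nonneg (by linarith) (by linarith)
  nlinarith [mul_nonneg (mul_pos hp0 (by linarith : 0 < 1 - p)).le key]

lemma termRatio_le_termRatio (hf0 : 0 ≤ f) (hf1 : f < 1) (hp0 : 0 < p) (hp1 : p < 1)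
    (hmn : m ≤ n) (hkm : (km : ℝ) = f * m) (hkn : (kn : ℝ) = f * n) (i : ℕ) :
    termRatio p m km i ≤ termRatio p n kn i := by
  rcases le_or_gt i km with hik | hki
  · exact Finset.prod_le_prod
      (fun _ hs => (stepRatio_pos hp0 hp1 ((mem_range.mp hs).trans_le hik)
        (le_of_cast_le_mul_s5 hf1.le hkm.le)).le)
      fun s _ => stepRatio_le_stepRatio hf0 hf1 hp0 hp1 hmn hkm hkn s
  · rw [termRatio_eq_zero_of_lt hki]
    exact termRatio_nonneg hp0 hp1 (le_of_cast_le_mul_s5 hf1.le hkn.le) i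

lemma B_div_b_lt_B_div_b (hf0 : 0 < f) (hf1 : f < 1) (hp0 : 0 < p) (hp1 : p < 1)
    (hmn : m < n) (hkm : (km : ℝ) = f * m) (hkn : (kn : ℝ) = f * n) :
    B m km p / b m km p < B n kn p / b n kn p := by
  have hkk : km < kn := by
    have : (km : ℝ) < kn := by
      rw [hkm, hkn]
      exact mul_lt_mul_of_pos_left (by exact_mod_cast hmn) hf0
    exact_mod_cast this
  have hknn : kn ≤ n := le_of_cast_le_mul_s5 hf1.le hkn.le
  refine hasSum_lt (i := km + 1) (termRatio_le_termRatio hf0.le hf1 hp0 hp1 hmn.le hkm hkn) ?_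
    (hasSum_termRatio hp0.ne' hp1.ne (le_of_cast_le_mul_s5 hf1.le hkm.le))
    (hasSum_termRatio hp0.ne' hp1.ne hknn)
  rw [termRatio_eq_zero_of_lt (lt_add_one km)]
  exact termRatio_pos hp0 hp1 hkk hknn

end Monotone

section Limit

variable {f p : ℝ} {k : ℕ → ℕ}

lemma tendsto_stepRatio (hk : Tendsto (fun n : ℕ => (k n : ℝ) / n) atTop (nhds f))
    (hf1 : f ≠ 1) (hp : p ≠ 0) (s : ℕ) :
    Tendsto (fun n => stepRatio p n (k n) s) atTop (nhds (oddsRatio f p)) := by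
  have hden : p * (1 - f + 0) ≠ 0 := by
    rw [add_zero]
    exact mul_ne_zero hp (sub_ne_zero.mpr (Ne.symm hf1))
  have hlim := ((hk.sub (tendsto_const_div_atTop_nhds_zero_nat (s : ℝ))).mul_const (1 - p)).div
    (tendsto_const_nhds.mul ((tendsto_const_nhds.sub hk).add
      (tendsto_const_div_atTop_nhds_zero_nat (1 + s : ℝ)))) hden
  rw [show (f - 0) * (1 - p) / (p * (1 - f + 0)) = oddsRatio f p by rw [oddsRatio]; ring] at hlim
  refine hlim.congr' ((eventually_ne_atTop 0).mono fun n hn => ?_)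
  have hn' : (n : ℝ) ≠ 0 := by exact_mod_cast hn
  simp only [Pi.div_apply]
  rw [stepRatio, ← mul_div_mul_right ((k n - s : ℝ) * (1 - p)) _ (inv_ne_zero hn')]
  congr 1
  · field_simp
  · field_simp
    ring

lemma tendsto_termRatio (hk : Tendsto (fun n : ℕ => (k n : ℝ) / n) atTop (nhds f))
    (hf1 : f ≠ 1) (hp : p ≠ 0) (i : ℕ) :
    Tendsto (fun n => termRatio p n (k n) i) atTop (nhds (oddsRatio f p ^ i)) := by
  simpa [termRatio] using tendsto_finsetProd (range i) fun s _ => tendsto_stepRatio hk hf1 hp s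

lemma tendsto_B_div_b (hf0 : 0 ≤ f) (hfp : f < p) (hp1 : p < 1) (hkf : ∀ n, (k n : ℝ) ≤ f * n)
    (hk : Tendsto (fun n : ℕ => (k n : ℝ) / n) atTop (nhds f)) :
    Tendsto (fun n => B n (k n) p / b n (k n) p) atTop (nhds (1 - oddsRatio f p)⁻¹) := by
  have hp0 : 0 < p := hf0.trans_lt hfp
  have hf1 : f < 1 := hfp.trans hp1
  have hx0 := oddsRatio_nonneg hf0 hf1 hp0 hp1
  have hx1 := oddsRatio_lt_one hfp hp0 hp1
  have hsum (n : ℕ) : B n (k n) p / b n (k n) p = ∑' i, termRatio p n (k n) i :=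
    (hasSum_termRatio hp0.ne' hp1.ne (le_of_cast_le_mul_s5 hf1.le (hkf n))).tsum_eq.symm
  simp_rw [hsum, ← tsum_geometric_of_lt_one hx0 hx1]
  refine tendsto_tsum_of_dominated_convergence (summable_geometric_of_lt_one hx0 hx1)
    (tendsto_termRatio hk hf1.ne hp0.ne') (Eventually.of_forall fun n i => ?_)
  rw [Real.norm_of_nonneg (termRatio_nonneg hp0 hp1 (le_of_cast_le_mul_s5 hf1.le (hkf n)) i)]
  exact termRatio_le_oddsRatio_pow hf0 hf1 hp0 hp1 (hkf n) i

end Limit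

theorem binomial_ratio_monotone_and_limit
    (f p : ℝ) (hf0 : 0 < f) (hfp : f < p) (hp1 : p < 1) :
    (∀ m n : ℕ, 0 < m → m < n →
      (⌊f * m⌋₊ : ℝ) = f * m → (⌊f * n⌋₊ : ℝ) = f * n →
      B m ⌊f * m⌋₊ p / b m ⌊f * m⌋₊ p < B n ⌊f * n⌋₊ p / b n ⌊f * n⌋₊ p) ∧
    (∀ n : ℕ, 0 < n →
      B n ⌊f * n⌋₊ p / b n ⌊f * n⌋₊ p < (1 - f) * p / (p - f)) ∧
    Tendsto (fun n : ℕ => B n ⌊f * n⌋₊ p / b n ⌊f * n⌋₊ p)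
      atTop (nhds ((1 - f) * p / (p - f))) := by
  have hp0 : 0 < p := hf0.trans hfp
  have hf1 : f < 1 := hfp.trans hp1
  have hfloor (n : ℕ) : (⌊f * n⌋₊ : ℝ) ≤ f * n := Nat.floor_le (by positivity)
  rw [← one_sub_oddsRatio_inv hf1.ne hp0.ne']
  exact ⟨fun m n _ hmn hm hn => B_div_b_lt_B_div_b hf0 hf1 hp0 hp1 hmn hm hn,
    fun n _ => B_div_b_lt hf0 hfp hp1 (hfloor n),
    tendsto_B_div_b hf0.le hfp hp1 hfloor
      ((tendsto_nat_floor_mul_div_atTop hf0.le).comp tendsto_natCast_atTop_atTop)⟩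
end

section
/- Let n, k be real numbers with n ≥ 0, let 0 < p < 1, and suppose 0 ≤ k ≤ p·n. Then U(n,k,p) < 2·L(n,k,p). -/
/-!
`L` is the larger root of `x² = (k + 1 - p n) x + p (n - k)`, and it is at least `1`. Taking
`a = ⌊L⌋`, the quadratic relation gives
`(2L - V(a)) (p n + p - k + a) = (L - a)(p n - k + p) + (a + 1 - L)(L - a + 1 - p) + (L - 1)`,
which is positive because `a ≤ L < a + 1`; hence `U ≤ V(⌊L⌋) < 2L`.
-/

open Real

section

variable {n k p : ℝ}

lemma sub_add_one_le_sqrt_discr (hp : p ≤ 1) (hk : 0 ≤ k) :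
    p * n - k + 1 ≤ √((p * n - k + 1) ^ 2 + 4 * (1 - p) * k) :=
  Real.le_sqrt_of_sq_le (by nlinarith [mul_nonneg (sub_nonneg.2 hp) hk])

lemma one_le_L_s11 (hp : p ≤ 1) (hk : 0 ≤ k) : 1 ≤ L n k p := by
  have := sub_add_one_le_sqrt_discr (n := n) hp hk
  unfold L
  linarith

lemma L_sq (hp : p ≤ 1) (hk : 0 ≤ k) :
    L n k p ^ 2 = (k + 1 - p * n) * L n k p + p * (n - k) := by
  have hdiscr : 0 ≤ (p * n - k + 1) ^ 2 + 4 * (1 - p) * k := by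
    nlinarith [mul_nonneg (sub_nonneg.2 hp) hk, sq_nonneg (p * n - k + 1)]
  have hs := Real.sq_sqrt hdiscr
  unfold L
  linear_combination hs / 4

lemma V_nonneg {a : ℝ} (hp : 0 ≤ p) (ha : 0 ≤ a) (hkn : k ≤ n) (hkpn : k ≤ p * n + p) :
    0 ≤ V n k p a := by
  unfold V
  have : 0 ≤ p * (n - k + a + 1) / (p * n + p - k + a) :=
    div_nonneg (mul_nonneg hp (by linarith)) (by linarith)
  linarith

lemma U_le_V (hp : 0 ≤ p) (hkn : k ≤ n) (hkpn : k ≤ p * n + p) (m : ℕ) :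
    U n k p ≤ V n k p m :=
  ciInf_le ⟨0, by rintro _ ⟨i, rfl⟩; exact V_nonneg hp i.cast_nonneg hkn hkpn⟩ m

lemma V_lt_two_mul_of_sq_eq {x a : ℝ} (hp0 : 0 < p) (hp1 : p < 1) (hk : k ≤ p * n)
    (hx : x ^ 2 = (k + 1 - p * n) * x + p * (n - k)) (hx1 : 1 ≤ x) (hax : a ≤ x)
    (hxa : x < a + 1) :
    V n k p a < 2 * x := by
  have hden : 0 < p * n + p - k + a := by linarith
  have key : (2 * x - a) * (p * n + p - k + a) - p * (n - k + a + 1) =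
      (x - a) * (p * n - k + p) + (a + 1 - x) * (x - a + 1 - p) + (x - 1) := by
    linear_combination hx
  have hpos : 0 < (x - a) * (p * n - k + p) + (a + 1 - x) * (x - a + 1 - p) + (x - 1) := by
    have := mul_nonneg (sub_nonneg.2 hax) (by linarith : 0 ≤ p * n - k + p)
    have := mul_pos (sub_pos.2 hxa) (by linarith : 0 < x - a + 1 - p)
    linarith
  have : p * (n - k + a + 1) / (p * n + p - k + a) < 2 * x - a := by
    rw [div_lt_iff₀ hden]
    linarith
  unfold V
  linarith

end

theorem U_lt_two_L (n k p : ℝ) (hn : 0 ≤ n) (hp0 : 0 < p) (hp1 : p < 1)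
    (hk0 : 0 ≤ k) (hk : k ≤ p * n) :
    U n k p < 2 * L n k p := by
  have hL1 : 1 ≤ L n k p := one_le_L_s11 hp1.le hk0
  have hkn : k ≤ n := hk.trans (mul_le_of_le_one_left hn hp1.le)
  calc U n k p ≤ V n k p ⌊L n k p⌋₊ := U_le_V hp0.le hkn (by linarith) _
    _ < 2 * L n k p :=
      V_lt_two_mul_of_sq_eq hp0 hp1 hk (L_sq hp1.le hk0) hL1
        (Nat.floor_le (by linarith)) (Nat.lt_floor_add_one _)
end
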